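/- arXiv:math/0501326 — 8 statements merged into one kernel-verified Lean document; each statement's English description precedes it below -/
import Mathlib

section
/- Let M be a Riesz monoid, let n be a positive integer, and let a_0, …, a_{n−1}, b ∈ M with a_i ≤ b (in the algebraic preorder) for all i < n. Then there exists x ∈ ◇⟨a_i : i < n⟩ such that Σ_{i<n} a_i ≤ b + x. -/
/-- The algebraic preorder on a commutative monoid: `x ≤ y` iff `x + z = y` for some `z`. -/
def algLE {M : Type*} [AddCommMonoid M] (x y : M) : Prop := ∃ z, x + z = y

/-- A Riesz monoid: if `c ≤ a + b` then `c = a' + b'` for some `a' ≤ a` and `b' ≤ b`. -/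
def IsRieszMonoid (M : Type*) [AddCommMonoid M] : Prop :=
  ∀ a b c : M, algLE c (a + b) → ∃ a' b', algLE a' a ∧ algLE b' b ∧ c = a' + b'

open scoped Classical in
/-- `s ∈ ◇⟨a_i : i ∈ ι⟩`: `s` is a sum `Σ_{p ⊆ I', |p| = 2} x_p` for some finite `I' ⊆ ι`,
where `x_{{i,j}} ≤ a_i, a_j` for all distinct `i, j ∈ I'`. -/
def memDiatFam {M : Type*} [AddCommMonoid M] {ι : Type*} (a : ι → M) (s : M) : Prop :=
  ∃ (I' : Finset ι) (x : Sym2 ι → M),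
    (∀ i ∈ I', ∀ j ∈ I', i ≠ j → algLE (x s(i, j)) (a i)) ∧
    s = ∑ p ∈ I'.sym2.filter (fun p => ¬ p.IsDiag), x p

/-- Split `d ≤ Σ a + c` as `d = Σ y + r` with `y i ≤ a i` and `r ≤ c`. -/
lemma riesz_split {M : Type*} [AddCommMonoid M] (hM : IsRieszMonoid M)
    {ι : Type*} [DecidableEq ι] (s : Finset ι) (a : ι → M) (c : M) :
    ∀ d : M, algLE d ((∑ i ∈ s, a i) + c) →
    ∃ (y : ι → M) (r : M), (∀ i ∈ s, algLE (y i) (a i)) ∧ algLE r c ∧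
      d = (∑ i ∈ s, y i) + r := by
  induction s using Finset.induction_on with
  | empty =>
    intro d hd
    exact ⟨fun _ => 0, d, by simp, by simpa using hd, by simp⟩
  | @insert i₀ s hi ih =>
    intro d hd
    rw [Finset.sum_insert hi, add_assoc] at hd
    obtain ⟨u, v, hu, hv, hduv⟩ := hM (a i₀) ((∑ i ∈ s, a i) + c) d hd
    obtain ⟨y, r, hy, hr, hv'⟩ := ih v hv
    refine ⟨Function.update y i₀ u, r, ?_, hr, ?_⟩
    · intro i his
      rcases Finset.mem_insert.mp his with rfl | his
      · simpa using hu
      · have hne : i ≠ i₀ := ne_of_mem_of_not_mem his hi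
        simpa [Function.update_of_ne hne] using hy i his
    · have hsum : ∑ i ∈ s, Function.update y i₀ u i = ∑ i ∈ s, y i :=
        Finset.sum_congr rfl fun i his =>
          Function.update_of_ne (ne_of_mem_of_not_mem his hi) _ _
      rw [Finset.sum_insert hi, Function.update_self, hsum, hduv, hv', add_assoc]

lemma riesz_aux {M : Type*} [AddCommMonoid M] (hM : IsRieszMonoid M)
    {ι : Type*} [DecidableEq ι] (s : Finset ι) (a : ι → M) (b : M)
    (h : ∀ i ∈ s, algLE (a i) b) :
    ∃ x : Sym2 ι → M,
      (∀ i ∈ s, ∀ j ∈ s, i ≠ j → algLE (x s(i, j)) (a i)) ∧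
      algLE (∑ i ∈ s, a i) (b + ∑ p ∈ s.sym2.filter (fun p => ¬ p.IsDiag), x p) := by
  induction s using Finset.induction_on with
  | empty =>
    exact ⟨0, by simp, ⟨b, by simp⟩⟩
  | @insert i₀ s hi ih =>
    obtain ⟨x, hx, c, hc⟩ := ih (fun i his => h i (Finset.mem_insert_of_mem his))
    set X := ∑ p ∈ s.sym2.filter (fun p => ¬ p.IsDiag), x p with hX
    obtain ⟨e, he⟩ := h i₀ (Finset.mem_insert_self i₀ s)
    have hle : algLE (a i₀) ((∑ i ∈ s, a i) + c) :=
      ⟨e + X, by rw [← add_assoc, he, hc]⟩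
    obtain ⟨y, r, hy, ⟨t, hrt⟩, hd⟩ := riesz_split hM s a c (a i₀) hle
    -- each y i is ≤ a i₀
    have hyi₀ : ∀ i ∈ s, algLE (y i) (a i₀) := by
      intro i his
      refine ⟨(∑ j ∈ s.erase i, y j) + r, ?_⟩
      rw [← add_assoc, Finset.add_sum_erase s y his, ← hd]
    -- the new symmetric family
    have gsymm : ∀ i j : ι,
        (if i = i₀ then y j else if j = i₀ then y i else x s(i, j)) =
        (if j = i₀ then y i else if i = i₀ then y j else x s(j, i)) := by
      intro i j
      by_cases h1 : i = i₀ <;> by_cases h2 : j = i₀ <;>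
        simp [h1, h2, Sym2.eq_swap]
    let x' : Sym2 ι → M := Sym2.lift
      ⟨fun i j => if i = i₀ then y j else if j = i₀ then y i else x s(i, j),
       fun i j => by simpa using gsymm i j⟩
    have hx'eq : ∀ i j : ι, x' s(i, j) =
        if i = i₀ then y j else if j = i₀ then y i else x s(i, j) := fun i j => rfl
    refine ⟨x', ?_, ?_⟩
    · intro i his j hjs hij
      by_cases h1 : i = i₀
      · subst h1
        have hjs' : j ∈ s := (Finset.mem_insert.mp hjs).resolve_left (Ne.symm hij)
        rw [hx'eq, if_pos rfl]
        exact hyi₀ j hjs'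
      · have his' : i ∈ s := (Finset.mem_insert.mp his).resolve_left h1
        by_cases h2 : j = i₀
        · subst h2
          rw [hx'eq, if_neg h1, if_pos rfl]
          exact hy i his'
        · have hjs' : j ∈ s := (Finset.mem_insert.mp hjs).resolve_left h2
          rw [hx'eq, if_neg h1, if_neg h2]
          exact hx i his' j hjs' hij
    · -- sum decomposition
      have hnew : ∑ p ∈ (insert i₀ s).sym2.filter (fun p => ¬ p.IsDiag), x' p =
          (∑ j ∈ s, y j) + X := by
        have hset : (insert i₀ s).sym2.filter (fun p => ¬ p.IsDiag) =
            (s.image fun j => s(i₀, j)) ∪ s.sym2.filter (fun p => ¬ p.IsDiag) := by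
          rw [Finset.sym2_insert, Finset.filter_union]
          congr 1
          ext p
          simp only [Finset.mem_filter, Finset.mem_image, Finset.mem_insert]
          constructor
          · rintro ⟨⟨j, (rfl | hjs), rfl⟩, hdiag⟩
            · exact absurd (Sym2.mk_isDiag_iff.mpr rfl) hdiag
            · exact ⟨j, hjs, rfl⟩
          · rintro ⟨j, hjs, rfl⟩
            refine ⟨⟨j, Or.inr hjs, rfl⟩, ?_⟩
            rw [Sym2.mk_isDiag_iff]
            exact (ne_of_mem_of_not_mem hjs hi).symm
        have hdisj : Disjoint (s.image fun j => s(i₀, j))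
            (s.sym2.filter (fun p => ¬ p.IsDiag)) := by
          rw [Finset.disjoint_left]
          rintro p hp hq
          obtain ⟨j, hjs, rfl⟩ := Finset.mem_image.mp hp
          have := Finset.mem_sym2_iff.mp (Finset.mem_filter.mp hq).1 i₀ (by simp)
          exact hi this
        rw [hset, Finset.sum_union hdisj]
        congr 1
        · rw [Finset.sum_image (fun j hj j' hj' hjj' => Sym2.congr_right.mp hjj')]
          exact Finset.sum_congr rfl fun j hj => by rw [hx'eq, if_pos rfl]
        · refine Finset.sum_congr rfl fun p hp => ?_
          obtain ⟨hp', _⟩ := Finset.mem_filter.mp hp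
          induction p using Sym2.ind with
          | _ i j =>
            have hij : i ∈ s ∧ j ∈ s := Finset.mk_mem_sym2_iff.mp hp'
            rw [hx'eq, if_neg (ne_of_mem_of_not_mem hij.1 hi),
              if_neg (ne_of_mem_of_not_mem hij.2 hi)]
      refine ⟨t, ?_⟩
      have h1 : (∑ i ∈ s, a i) + (r + t) = b + X := by rw [hrt]; exact hc
      rw [hnew, Finset.sum_insert hi, hd]
      calc ((∑ i ∈ s, y i) + r) + (∑ i ∈ s, a i) + t
          = (∑ i ∈ s, y i) + ((∑ i ∈ s, a i) + (r + t)) := by abel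
        _ = (∑ i ∈ s, y i) + (b + X) := by rw [h1]
        _ = b + ((∑ j ∈ s, y j) + X) := by abel

/-- Lemma 2.2: in a Riesz monoid, if `a_i ≤ b` for all `i < n`, then there is
`x ∈ ◇⟨a_i : i < n⟩` with `Σ_{i<n} a_i ≤ b + x`. -/
theorem stmt_0 {M : Type*} [AddCommMonoid M] (hM : IsRieszMonoid M)
    (n : ℕ) (hn : 0 < n) (a : Fin n → M) (b : M) (h : ∀ i : Fin n, algLE (a i) b) :
    ∃ x : M, memDiatFam a x ∧ algLE (∑ i, a i) (b + x) := by
  obtain ⟨x, hx, hle⟩ := riesz_aux hM Finset.univ a b (fun i _ => h i)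
  refine ⟨_, ⟨Finset.univ, x, fun i _ j _ hij => hx i (Finset.mem_univ i)
    j (Finset.mem_univ j) hij, ?_⟩, hle⟩
  exact Finset.sum_congr (by congr) fun _ _ => rfl
end

section
/- Let M be a strongly separative commutative monoid. Then every element e of M has stable rank at most 2; that is, for all a, b ∈ M, 2e + a = e + b implies a ≤ b in the algebraic preorder. -/
/-- `e` has stable rank at most `k`: `k•e + a = e + b` implies `a ≤ b`. -/
def HasStableRankLE {M : Type*} [AddCommMonoid M] (e : M) (k : ℕ) : Prop :=
  ∀ a b : M, k • e + a = e + b → algLE a b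

/-- `M` is strongly separative: `a + b = 2b` implies `a = b`. -/
def IsStronglySeparative (M : Type*) [AddCommMonoid M] : Prop :=
  ∀ a b : M, a + b = 2 • b → a = b

/-- In a strongly separative commutative monoid, every element has stable rank at most 2. -/
theorem stmt_2 {M : Type*} [AddCommMonoid M]
    (hss : IsStronglySeparative M) (e : M) :
    HasStableRankLE e 2 := by
  intro a b h
  rw [two_nsmul] at h
  have h2 : b + (e + a) = 2 • (e + a) := by
    rw [two_nsmul]
    calc b + (e + a) = (e + e + a) + a := by rw [h]; abel
    _ = (e + a) + (e + a) := by abel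
  have hb := hss b (e + a) h2
  exact ⟨e, by rw [hb, add_comm]⟩
end

section
/- Let e be an element of a commutative monoid M, let k and n be positive integers. If e has stable rank at most k in M, then n·e has stable rank at most k in M. Consequently sr_M(ne) ≤ sr_M(e) for all n. -/
/-- `sr_M(e)`: the least positive integer `k` such that `e` has stable rank at most `k`,
and `∞` if there is none. -/
noncomputable def sr {M : Type*} [AddCommMonoid M] (e : M) : ℕ∞ :=
  sInf {c : ℕ∞ | ∃ k : ℕ, 0 < k ∧ c = (k : ℕ∞) ∧ HasStableRankLE e k}

lemma aux_sr {M : Type*} [AddCommMonoid M] (e : M) (k : ℕ)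
    (h : HasStableRankLE e k) : ∀ n : ℕ, HasStableRankLE (n • e) k := by
  intro n
  induction n with
  | zero =>
    intro a b hab
    simp only [zero_smul, smul_zero, zero_add] at hab
    exact ⟨0, by simp [hab]⟩
  | succ n ih =>
    intro a b hab
    rw [succ_nsmul, smul_add] at hab
    have h1 : k • e + (k • (n • e) + a) = e + (n • e + b) := by
      calc k • e + (k • (n • e) + a) = k • (n • e) + k • e + a := by abel
        _ = n • e + e + b := hab
        _ = e + (n • e + b) := by abel
    obtain ⟨c, hc⟩ := h _ _ h1
    obtain ⟨d, hd⟩ := ih (a + c) b (by rw [← hc]; abel)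
    exact ⟨c + d, by rw [← hd]; abel⟩

/-- Lemma 3.2: if `e` has stable rank at most `k`, then so does `n • e`; consequently
`sr_M (n • e) ≤ sr_M e` for every positive integer `n`. -/
theorem stmt_3 {M : Type*} [AddCommMonoid M] (e : M) (k n : ℕ) (hk : 0 < k) (hn : 0 < n)
    (h : HasStableRankLE e k) :
    HasStableRankLE (n • e) k ∧ ∀ m : ℕ, 0 < m → sr (m • e) ≤ sr e := by
  refine ⟨aux_sr e k h n, fun m _ => ?_⟩
  apply sInf_le_sInf
  rintro c ⟨j, hj, rfl, hje⟩
  exact ⟨j, hj, rfl, aux_sr e j hje m⟩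
end

section
/- Let S be a distributive join-semilattice such that for all a₀, a₁ ∈ S the set ↓a₀ ∩ ↓a₁ = {x ∈ S : x ≤ a₀ and x ≤ a₁} has an at most countable cofinal subset. Then S satisfies URP⁺_sr, i.e., URP⁺_sr(e) holds for every e ∈ S. -/
/-- A join-semilattice is distributive if `c ≤ a ⊔ b` implies `c = a' ⊔ b'` for some
`a' ≤ a`, `b' ≤ b`. -/
def DistribSemilatticeSup (S : Type*) [SemilatticeSup S] : Prop :=
  ∀ a b c : S, c ≤ a ⊔ b → ∃ a' b', a' ≤ a ∧ b' ≤ b ∧ c = a' ⊔ b'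

/-- `B` is ℵ₀-downward directed: every countable subset of `B` lies above some element
of `B`. -/
def DownDirectedCtbl {S : Type*} [Preorder S] (B : Set S) : Prop :=
  ∀ C ⊆ B, C.Countable → ∃ b ∈ B, ∀ c ∈ C, b ≤ c

/-- The uniform refinement property `URP⁺_sr(e)`. -/
def URPsrPlus {S : Type*} [SemilatticeSup S] (e : S) : Prop :=
  ∀ a₀ a₁ : S, ∀ B : Set S, DownDirectedCtbl B →
    (∀ b ∈ B, e ≤ a₀ ⊔ b ∧ e ≤ a₁ ⊔ b) →
    ∃ a : S, a ≤ a₀ ∧ a ≤ a₁ ∧ ∀ b ∈ B, e ≤ a ⊔ b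

/-- Proposition 7.1: a distributive join-semilattice in which every `↓a₀ ∩ ↓a₁` has an at
most countable cofinal subset satisfies `URP⁺_sr` at every element. -/
theorem stmt_12 {S : Type*} [SemilatticeSup S] (hd : DistribSemilatticeSup S)
    (hcc : ∀ a₀ a₁ : S, ∃ X : Set S, X.Countable ∧ X ⊆ {x : S | x ≤ a₀ ∧ x ≤ a₁} ∧
      ∀ y ∈ {x : S | x ≤ a₀ ∧ x ≤ a₁}, ∃ x ∈ X, y ≤ x) :
    ∀ e : S, URPsrPlus e := by
  intro e a₀ a₁ B hB hab
  obtain ⟨X, hXc, hXsub, hXcof⟩ := hcc a₀ a₁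
  -- For each b ∈ B, there is x ∈ X with e ≤ x ⊔ b.
  have key : ∀ b ∈ B, ∃ x ∈ X, e ≤ x ⊔ b := by
    intro b hb
    obtain ⟨h0, h1⟩ := hab b hb
    obtain ⟨u, v, hu, hv, heq⟩ := hd a₀ b e h0
    have hu1 : u ≤ a₁ ⊔ b := le_trans (heq ▸ le_sup_left) h1
    obtain ⟨u₁, w, hu₁, hw, hueq⟩ := hd a₁ b u hu1
    have hu₁0 : u₁ ≤ a₀ := le_trans (hueq ▸ le_sup_left) hu
    obtain ⟨x, hx, hle⟩ := hXcof u₁ ⟨hu₁0, hu₁⟩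
    refine ⟨x, hx, ?_⟩
    calc e = (u₁ ⊔ w) ⊔ v := by rw [← hueq, ← heq]
    _ ≤ x ⊔ b := sup_le (sup_le (hle.trans le_sup_left)
        (le_trans hw le_sup_right)) (le_trans hv le_sup_right)
  -- Suppose no single x ∈ X works.
  by_contra hcon
  push_neg at hcon
  have hbad : ∀ x ∈ X, ∃ b ∈ B, ¬ e ≤ x ⊔ b := by
    intro x hx
    obtain ⟨hx0, hx1⟩ := hXsub hx
    obtain ⟨b, hb, hnb⟩ := hcon x hx0 hx1
    exact ⟨b, hb, hnb⟩
  classical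
  choose! g hgB hgn using hbad
  have hCsub : g '' X ⊆ B := by
    rintro _ ⟨x, hx, rfl⟩; exact hgB x hx
  obtain ⟨bs, hbs, hble⟩ := hB (g '' X) hCsub (hXc.image g)
  obtain ⟨x, hx, hex⟩ := key bs hbs
  exact hgn x hx (hex.trans (sup_le_sup_left (hble _ ⟨x, hx, rfl⟩) x))
end

section
/- Let S be a join-semilattice that is the direct limit of a countable sequence of distributive lattices and join-homomorphisms: there are distributive lattices D_n (n < ω), join-homomorphisms f_{m,n} : D_m → D_n for m ≤ n with f_{n,n} = id and f_{n,p} ∘ f_{m,n} = f_{m,p} for m ≤ n ≤ p, and join-homomorphisms g_n : D_n → S with g_n = g_m ∘ f_{n,m} for n ≤ m, such that S = ⋃_{n<ω} g_n[D_n] and, for all n and all x, y ∈ D_n, g_n(x) ≤ g_n(y) iff f_{n,m}(x) ≤ f_{n,m}(y) for some m ≥ n. Then S satisfies URP⁺_sr (hence also URP_sr). -/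
open scoped Classical in
/-- `s ∈ ◇A` in a join-semilattice: `s` is the join `Σ_{p ⊆ A', |p| = 2} x_p` (with respect
to `∨`) for some finite `A' ⊆ A`, where `x_{{a,b}} ≤ a, b` for all distinct `a, b ∈ A'`. -/
def memDiat {S : Type*} [SemilatticeSup S] (A : Set S) (s : S) : Prop :=
  ∃ (A' : Finset S) (x : Sym2 S → S), ↑A' ⊆ A ∧
    (∀ a ∈ A', ∀ b ∈ A', a ≠ b → x s(a, b) ≤ a) ∧
    ∃ hne : (A'.sym2.filter (fun p => ¬ p.IsDiag)).Nonempty,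
      s = (A'.sym2.filter (fun p => ¬ p.IsDiag)).sup' hne x

/-- The uniform refinement property `URP_sr(e)`. -/
def URPsr {S : Type*} [SemilatticeSup S] (e : S) : Prop :=
  ∀ A B : Set S, ¬ A.Countable → DownDirectedCtbl B →
    (∀ a ∈ A, ∀ b ∈ B, a ≤ e ∧ e ≤ a ⊔ b) →
    ∃ x : S, memDiat A x ∧ ∀ b ∈ B, e ≤ x ⊔ b
/-- Corollary 7.2: a join-semilattice that is a direct limit of a countable sequence of
distributive lattices and join-homomorphisms satisfies `URP⁺_sr` (hence also `URP_sr`). -/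
theorem stmt_13 {S : Type*} [SemilatticeSup S]
    (D : ℕ → Type*) [∀ n, DistribLattice (D n)]
    (f : ∀ m n : ℕ, m ≤ n → D m → D n)
    (hf_sup : ∀ m n (h : m ≤ n) (x y : D m), f m n h (x ⊔ y) = f m n h x ⊔ f m n h y)
    (hf_id : ∀ n (x : D n), f n n le_rfl x = x)
    (hf_comp : ∀ m n p (hmn : m ≤ n) (hnp : n ≤ p) (x : D m),
      f n p hnp (f m n hmn x) = f m p (hmn.trans hnp) x)
    (g : ∀ n, D n → S)
    (hg_sup : ∀ n (x y : D n), g n (x ⊔ y) = g n x ⊔ g n y)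
    (hg_comm : ∀ n m (h : n ≤ m) (x : D n), g n x = g m (f n m h x))
    (hg_surj : ∀ s : S, ∃ n, ∃ x : D n, g n x = s)
    (hg_le : ∀ n (x y : D n), g n x ≤ g n y ↔ ∃ m, ∃ h : n ≤ m, f n m h x ≤ f n m h y) :
    (∀ e : S, URPsrPlus e) ∧ (∀ e : S, URPsr e) := by
  have hf_mono : ∀ m n (h : m ≤ n), Monotone (f m n h) := by
    intro m n h x y hxy
    have h2 : f m n h y = f m n h x ⊔ f m n h y := by
      conv_lhs => rw [← sup_eq_right.mpr hxy, hf_sup]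
    exact le_sup_left.trans h2.ge
  have hg_mono : ∀ n, Monotone (g n) := by
    intro n x y hxy
    have h2 : g n y = g n x ⊔ g n y := by
      conv_lhs => rw [← sup_eq_right.mpr hxy, hg_sup]
    exact le_sup_left.trans h2.ge
  have key : ∀ e : S, URPsrPlus e := by
    intro e a₀ a₁ B hB hab
    obtain ⟨p₀, e₀, he₀⟩ := hg_surj e
    obtain ⟨p₁, x₀, hx₀⟩ := hg_surj a₀
    obtain ⟨p₂, x₁, hx₁⟩ := hg_surj a₁
    set n := max p₀ (max p₁ p₂) with hn
    set ebar := f p₀ n (le_max_left _ _) e₀ with hebar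
    set abar₀ := f p₁ n (le_max_of_le_right (le_max_left _ _)) x₀ with habar₀
    set abar₁ := f p₂ n (le_max_of_le_right (le_max_right _ _)) x₁ with habar₁
    have hge : g n ebar = e := by rw [hebar, ← hg_comm]; exact he₀
    have hga₀ : g n abar₀ = a₀ := by rw [habar₀, ← hg_comm]; exact hx₀
    have hga₁ : g n abar₁ = a₁ := by rw [habar₁, ← hg_comm]; exact hx₁
    suffices hsuf : ∃ m, ∃ hm : n ≤ m,
        ∀ b ∈ B, e ≤ g m (f n m hm abar₀ ⊓ f n m hm abar₁) ⊔ b by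
      obtain ⟨m, hm, hall⟩ := hsuf
      refine ⟨g m (f n m hm abar₀ ⊓ f n m hm abar₁), ?_, ?_, hall⟩
      · calc g m (f n m hm abar₀ ⊓ f n m hm abar₁) ≤ g m (f n m hm abar₀) :=
            hg_mono m inf_le_left
          _ = g n abar₀ := (hg_comm n m hm abar₀).symm
          _ = a₀ := hga₀
      · calc g m (f n m hm abar₀ ⊓ f n m hm abar₁) ≤ g m (f n m hm abar₁) :=
            hg_mono m inf_le_right
          _ = g n abar₁ := (hg_comm n m hm abar₁).symm
          _ = a₁ := hga₁
    by_contra hcon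
    push_neg at hcon
    choose bf hbfB hbf using fun t : {m : ℕ // n ≤ m} => hcon t.1 t.2
    obtain ⟨b, hbB, hble⟩ := hB (Set.range bf)
      (Set.range_subset_iff.mpr fun t => hbfB t) (Set.countable_range bf)
    obtain ⟨k, bbar, hbbar⟩ := hg_surj b
    set N := max n k with hN
    have hnN : n ≤ N := le_max_left _ _
    set eN := f n N hnN ebar with heN
    set a₀N := f n N hnN abar₀ with ha₀N
    set a₁N := f n N hnN abar₁ with ha₁N
    set bN := f k N (le_max_right _ _) bbar with hbN
    have hgeN : g N eN = e := by rw [heN, ← hg_comm]; exact hge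
    have hga₀N : g N a₀N = a₀ := by rw [ha₀N, ← hg_comm]; exact hga₀
    have hga₁N : g N a₁N = a₁ := by rw [ha₁N, ← hg_comm]; exact hga₁
    have hgbN : g N bN = b := by rw [hbN, ← hg_comm]; exact hbbar
    obtain ⟨h0, h1⟩ := hab b hbB
    have H0 : g N eN ≤ g N (a₀N ⊔ bN) := by rw [hg_sup, hgeN, hga₀N, hgbN]; exact h0
    have H1 : g N eN ≤ g N (a₁N ⊔ bN) := by rw [hg_sup, hgeN, hga₁N, hgbN]; exact h1
    obtain ⟨m₀, hm₀, hle₀⟩ := (hg_le N _ _).mp H0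
    obtain ⟨m₁, hm₁, hle₁⟩ := (hg_le N _ _).mp H1
    set M := max m₀ m₁ with hM
    have hNM : N ≤ M := hm₀.trans (le_max_left _ _)
    have push : ∀ (m : ℕ) (hm : N ≤ m), m ≤ M →
        ∀ x y : D N, f N m hm x ≤ f N m hm y → f N M hNM x ≤ f N M hNM y := by
      intro m hm hmM x y hxy
      have h3 := hf_mono m M hmM hxy
      rwa [hf_comp, hf_comp] at h3
    have H0M : f N M hNM eN ≤ f N M hNM a₀N ⊔ f N M hNM bN := by
      have h3 := push m₀ hm₀ (le_max_left _ _) _ _ hle₀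
      rwa [hf_sup] at h3
    have H1M : f N M hNM eN ≤ f N M hNM a₁N ⊔ f N M hNM bN := by
      have h3 := push m₁ hm₁ (le_max_right _ _) _ _ hle₁
      rwa [hf_sup] at h3
    have Hd : f N M hNM eN ≤ (f N M hNM a₀N ⊓ f N M hNM a₁N) ⊔ f N M hNM bN := by
      rw [sup_inf_right]; exact le_inf H0M H1M
    have hnM : n ≤ M := hnN.trans hNM
    have hA0eq : f N M hNM a₀N = f n M hnM abar₀ := hf_comp n N M hnN hNM abar₀
    have hA1eq : f N M hNM a₁N = f n M hnM abar₁ := hf_comp n N M hnN hNM abar₁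
    have hfinal : e ≤ g M (f n M hnM abar₀ ⊓ f n M hnM abar₁) ⊔ b := by
      calc e = g N eN := hgeN.symm
        _ = g M (f N M hNM eN) := hg_comm N M hNM eN
        _ ≤ g M ((f N M hNM a₀N ⊓ f N M hNM a₁N) ⊔ f N M hNM bN) := hg_mono M Hd
        _ = g M (f N M hNM a₀N ⊓ f N M hNM a₁N) ⊔ g M (f N M hNM bN) := hg_sup _ _ _
        _ = g M (f n M hnM abar₀ ⊓ f n M hnM abar₁) ⊔ b := by
            rw [hA0eq, hA1eq, ← hg_comm, hgbN]
    refine hbf ⟨M, hnM⟩ ?_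
    calc e ≤ g M (f n M hnM abar₀ ⊓ f n M hnM abar₁) ⊔ b := hfinal
      _ ≤ g M (f n M hnM abar₀ ⊓ f n M hnM abar₁) ⊔ bf ⟨M, hnM⟩ :=
          sup_le_sup_left (hble _ ⟨_, rfl⟩) _
  refine ⟨key, ?_⟩
  intro e A B hA hB hAB
  classical
  have hnt : A.Nontrivial := Set.not_subsingleton_iff.mp (fun h => hA h.countable)
  obtain ⟨a₀, ha₀, a₁, ha₁, hne⟩ := hnt
  obtain ⟨a, h0, h1, hall⟩ := key e a₀ a₁ B hB
    (fun b hb => ⟨(hAB a₀ ha₀ b hb).2, (hAB a₁ ha₁ b hb).2⟩)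
  refine ⟨a, ?_, hall⟩
  refine ⟨{a₀, a₁}, fun _ => a, ?_, ?_, ?_⟩
  · intro x hx
    simp only [Finset.coe_insert, Finset.coe_singleton, Set.mem_insert_iff,
      Set.mem_singleton_iff] at hx
    rcases hx with rfl | rfl <;> assumption
  · intro x hx y hy hxy
    simp only [Finset.mem_insert, Finset.mem_singleton] at hx
    rcases hx with rfl | rfl <;> assumption
  · have hmem : s(a₀, a₁) ∈ (({a₀, a₁} : Finset S).sym2.filter (fun p => ¬ p.IsDiag)) := by
      simp [Finset.mk_mem_sym2_iff, hne]
    exact ⟨⟨_, hmem⟩, (Finset.sup'_const _ a).symm⟩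
end

section
/- Let (S_n)_{n<ω} be an increasing sequence of join-subsemilattices of a join-semilattice S (S_m ⊆ S_n for m ≤ n) with S = ⋃_{n<ω} S_n. If every S_n satisfies URP_sr, then S satisfies URP_sr; similarly, if every S_n satisfies URP⁺_sr, then S satisfies URP⁺_sr. -/
/-- A subset of a join-semilattice closed under `⊔` is itself a join-semilattice. -/
def subSemilatticeSup {S : Type*} [SemilatticeSup S] (T : Set S)
    (h : ∀ x ∈ T, ∀ y ∈ T, x ⊔ y ∈ T) : SemilatticeSup T :=
  Subtype.semilatticeSup fun {x y} hx hy => h x hx y hy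

/- ### Auxiliary lemmas -/

private lemma filt_eq' {α : Type*} {p : α → Prop} (h₁ h₂ : DecidablePred p) (s : Finset α) :
    @Finset.filter α p h₁ s = @Finset.filter α p h₂ s := by
  have : h₁ = h₂ := funext fun a => Subsingleton.elim _ _
  subst this; rfl

private lemma exists_sup'_eq' {α β : Type*} [SemilatticeSup β] {s₁ s₂ : Finset α}
    (h : s₁ = s₂) {f : α → β} {v : β} (hne : s₁.Nonempty) (hv : v = s₁.sup' hne f) :
    ∃ hne' : s₂.Nonempty, v = s₂.sup' hne' f := by
  subst h; exact ⟨hne, hv⟩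

private lemma memDiat_iff' {S : Type*} [SemilatticeSup S] [DecidableEq S] (A : Set S) (s : S) :
    memDiat A s ↔ ∃ (A' : Finset S) (x : Sym2 S → S), ↑A' ⊆ A ∧
      (∀ a ∈ A', ∀ b ∈ A', a ≠ b → x s(a, b) ≤ a) ∧
      ∃ hne : (A'.sym2.filter (fun p => ¬ p.IsDiag)).Nonempty,
        s = (A'.sym2.filter (fun p => ¬ p.IsDiag)).sup' hne x := by
  constructor <;> rintro ⟨A', x, h1, h2, hne, hs⟩ <;>
    exact ⟨A', x, h1, h2, exists_sup'_eq' (filt_eq' _ _ _) hne hs⟩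

private lemma memDiat_mono {S : Type*} [SemilatticeSup S] {A₁ A₂ : Set S} (hA : A₁ ⊆ A₂)
    {s : S} (hs : memDiat A₁ s) : memDiat A₂ s := by
  obtain ⟨A', x, h1, h2, h3⟩ := hs
  exact ⟨A', x, h1.trans hA, h2, h3⟩

private lemma memDiat_val {S : Type*} [SemilatticeSup S] (T : Set S)
    (h : ∀ x ∈ T, ∀ y ∈ T, x ⊔ y ∈ T) (A : Set ↥T) (x : ↥T)
    (hx : @memDiat ↥T (subSemilatticeSup T h) A x) :
    memDiat (Subtype.val '' A) (x : S) := by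
  classical
  letI : SemilatticeSup ↥T := subSemilatticeSup T h
  rw [memDiat_iff'] at hx ⊢
  obtain ⟨A', xf, hA', hle, hne, hsup⟩ := hx
  set f : ↥T ↪ S := ⟨Subtype.val, Subtype.val_injective⟩ with hf
  set g : Sym2 ↥T ↪ Sym2 S := f.sym2Map with hg
  set F : Sym2 S → S := fun p => if hp : ∃ q : Sym2 ↥T, Sym2.map f q = p
      then ((xf hp.choose : ↥T) : S) else (x : S) with hF
  refine ⟨A'.map f, F, ?_, ?_, ?_⟩
  · intro a ha
    simp only [Finset.coe_map, Set.mem_image, Finset.mem_coe] at ha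
    obtain ⟨a₀, ha₀, rfl⟩ := ha
    exact ⟨a₀, hA' ha₀, rfl⟩
  · intro a ha b hb hab
    simp only [Finset.mem_map] at ha hb
    obtain ⟨a₀, ha₀, rfl⟩ := ha
    obtain ⟨b₀, hb₀, rfl⟩ := hb
    have hab₀ : a₀ ≠ b₀ := fun e => hab (by rw [e])
    have hpex : ∃ q : Sym2 ↥T, Sym2.map f q = s(f a₀, f b₀) := ⟨s(a₀, b₀), rfl⟩
    have hq : hpex.choose = s(a₀, b₀) :=
      Sym2.map.injective f.injective hpex.choose_spec
    have hFv : F s(f a₀, f b₀) = ((xf s(a₀, b₀) : ↥T) : S) := by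
      rw [hF]; simp only [dif_pos hpex]; rw [hq]
    rw [hFv]
    exact hle a₀ ha₀ b₀ hb₀ hab₀
  · have hfilt : ((A'.map f).sym2.filter (fun p => ¬ p.IsDiag))
        = (A'.sym2.filter (fun p => ¬ p.IsDiag)).map g := by
      ext p
      simp only [Finset.sym2_map, Finset.mem_filter, Finset.mem_map,
        Function.Embedding.sym2Map_apply, hg]
      constructor
      · rintro ⟨⟨q, hq, rfl⟩, hd⟩
        exact ⟨q, ⟨hq, fun hdq => hd ((Sym2.isDiag_map f.injective).mpr hdq)⟩, rfl⟩
      · rintro ⟨q, ⟨hq, hd⟩, rfl⟩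
        exact ⟨⟨q, hq, rfl⟩, fun hdq => hd ((Sym2.isDiag_map f.injective).mp hdq)⟩
    have hFg : ∀ q ∈ A'.sym2.filter (fun p => ¬ p.IsDiag),
        ((fun q => ((xf q : ↥T) : S)) q) = (F ∘ g) q := by
      intro q _
      have hpex : ∃ q' : Sym2 ↥T, Sym2.map (⇑f) q' = Sym2.map (⇑f) q := ⟨q, rfl⟩
      have hq' : hpex.choose = q := Sym2.map.injective f.injective hpex.choose_spec
      simp only [hF, Function.comp_apply]
      rw [show (g q : Sym2 S) = Sym2.map f q from rfl]
      rw [dif_pos hpex, hq']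
    have hne2 : ((A'.sym2.filter (fun p => ¬ p.IsDiag)).map g).Nonempty := Finset.map_nonempty.mpr hne
    refine exists_sup'_eq' hfilt.symm hne2 ?_
    have vH : SupHom ↥T S := ⟨Subtype.val, fun _ _ => rfl⟩
    calc (x : S) = ((⟨Subtype.val, fun _ _ => rfl⟩ : SupHom ↥T S) :
            ↥T → S) ((A'.sym2.filter (fun p => ¬ p.IsDiag)).sup' hne xf) := by rw [hsup]; rfl
      _ = (A'.sym2.filter (fun p => ¬ p.IsDiag)).sup' hne
            (fun q => ((xf q : ↥T) : S)) := map_finset_sup' _ hne xf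
      _ = (A'.sym2.filter (fun p => ¬ p.IsDiag)).sup' hne (F ∘ g) :=
            Finset.sup'_congr hne rfl hFg
      _ = ((A'.sym2.filter (fun p => ¬ p.IsDiag)).map g).sup' hne2 F := by
            rw [Finset.sup'_map]

/-- Proposition 7.3: if `S` is the increasing union of a sequence of join-subsemilattices
`T n`, and every `T n` satisfies `URP_sr` (resp. `URP⁺_sr`), then so does `S`. -/
theorem stmt_14 {S : Type*} [SemilatticeSup S] (T : ℕ → Set S)
    (hmono : ∀ m n : ℕ, m ≤ n → T m ⊆ T n)
    (hclosed : ∀ n, ∀ x ∈ T n, ∀ y ∈ T n, x ⊔ y ∈ T n)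
    (hcover : (⋃ n, T n) = Set.univ) :
    ((∀ n, ∀ e : T n, @URPsr ↥(T n) (subSemilatticeSup (T n) (hclosed n)) e) →
      ∀ e : S, URPsr e) ∧
    ((∀ n, ∀ e : T n, @URPsrPlus ↥(T n) (subSemilatticeSup (T n) (hclosed n)) e) →
      ∀ e : S, URPsrPlus e) := by
  have hmem : ∀ x : S, ∃ n, x ∈ T n := by
    intro x
    have : x ∈ ⋃ n, T n := hcover ▸ Set.mem_univ x
    simpa using this
  -- coinitiality of B ∩ T n for some (hence every larger) n
  have hcoinit : ∀ B : Set S, DownDirectedCtbl B → ∃ n, ∀ b ∈ B, ∃ b' ∈ B ∩ T n, b' ≤ b := by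
    intro B hB
    by_contra hcon
    push_neg at hcon
    choose bb hbB hbb using hcon
    obtain ⟨b, hbB', hble⟩ := hB (Set.range bb)
      (by rintro _ ⟨n, rfl⟩; exact hbB n) (Set.countable_range _)
    obtain ⟨m, hm⟩ := hmem b
    exact hbb m b ⟨hbB', hm⟩ (hble _ ⟨m, rfl⟩)
  -- B' is down-directed in the subtype
  have hBdir : ∀ (n : ℕ) (B : Set S), DownDirectedCtbl B →
      (∀ b ∈ B, ∃ b' ∈ B ∩ T n, b' ≤ b) →
      @DownDirectedCtbl ↥(T n)
        (@PartialOrder.toPreorder _ (@SemilatticeSup.toPartialOrder _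
          (subSemilatticeSup (T n) (hclosed n))))
        {b : ↥(T n) | ↑b ∈ B} := by
    intro n B hB hco
    letI : SemilatticeSup ↥(T n) := subSemilatticeSup (T n) (hclosed n)
    intro C hC hCc
    have himg : (Subtype.val '' C : Set S) ⊆ B := by
      rintro _ ⟨c, hc, rfl⟩; exact hC hc
    obtain ⟨b, hbB, hble⟩ := hB _ himg (hCc.image _)
    obtain ⟨b', ⟨hb'B, hb'T⟩, hb'le⟩ := hco b hbB
    refine ⟨⟨b', hb'T⟩, hb'B, fun c hc => ?_⟩
    exact Subtype.coe_le_coe.mp (hb'le.trans (hble _ ⟨c, hc, rfl⟩))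
  constructor
  · -- URPsr
    intro hURP e A B hA hB hAB
    obtain ⟨n₀, he₀⟩ := hmem e
    obtain ⟨n₁, hA₁⟩ : ∃ n, ¬ (A ∩ T n).Countable := by
      by_contra hcon
      push_neg at hcon
      apply hA
      have : A = ⋃ n, A ∩ T n := by
        ext a
        simp only [Set.mem_iUnion, Set.mem_inter_iff]
        exact ⟨fun ha => (hmem a).imp fun n hn => ⟨ha, hn⟩, fun ⟨n, hn, _⟩ => hn⟩
      rw [this]
      exact Set.countable_iUnion hcon
    obtain ⟨n₂, hB₂⟩ := hcoinit B hB
    set n := max n₀ (max n₁ n₂) with hn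
    have he : e ∈ T n := hmono n₀ n (le_max_left _ _) he₀
    have hAn : ¬ (A ∩ T n).Countable := fun hc => hA₁ <| hc.mono <|
      Set.inter_subset_inter_right _ (hmono n₁ n ((le_max_left _ _).trans (le_max_right _ _)))
    have hBn : ∀ b ∈ B, ∃ b' ∈ B ∩ T n, b' ≤ b := by
      intro b hb
      obtain ⟨b', ⟨h1, h2⟩, h3⟩ := hB₂ b hb
      exact ⟨b', ⟨h1, hmono n₂ n ((le_max_right _ _).trans (le_max_right _ _)) h2⟩, h3⟩
    letI : SemilatticeSup ↥(T n) := subSemilatticeSup (T n) (hclosed n)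
    set A' : Set ↥(T n) := {a : ↥(T n) | ↑a ∈ A} with hA'
    set B' : Set ↥(T n) := {b : ↥(T n) | ↑b ∈ B} with hB'
    have hA'unc : ¬ A'.Countable := by
      intro hc
      apply hAn
      have : A ∩ T n ⊆ Subtype.val '' A' := by
        rintro x ⟨hxA, hxT⟩
        exact ⟨⟨x, hxT⟩, hxA, rfl⟩
      exact (hc.image _).mono this
    obtain ⟨x, hxd, hxb⟩ := hURP n ⟨e, he⟩ A' B' hA'unc (hBdir n B hB hBn)
      (by
        rintro a ha b hb
        obtain ⟨h1, h2⟩ := hAB ↑a ha ↑b hb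
        exact ⟨Subtype.coe_le_coe.mp h1, Subtype.coe_le_coe.mp h2⟩)
    refine ⟨↑x, ?_, ?_⟩
    · refine memDiat_mono ?_ (memDiat_val (T n) (hclosed n) A' x hxd)
      rintro _ ⟨a, ha, rfl⟩; exact ha
    · intro b hb
      obtain ⟨b', ⟨hb'B, hb'T⟩, hb'le⟩ := hBn b hb
      have := hxb ⟨b', hb'T⟩ hb'B
      have h2 : e ≤ (x : S) ⊔ b' := Subtype.coe_le_coe.mpr this
      exact h2.trans (sup_le_sup_left hb'le _)
  · -- URPsrPlus
    intro hURP e a₀ a₁ B hB hab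
    obtain ⟨n₀, he₀⟩ := hmem e
    obtain ⟨m₀, ha₀⟩ := hmem a₀
    obtain ⟨m₁, ha₁⟩ := hmem a₁
    obtain ⟨n₂, hB₂⟩ := hcoinit B hB
    set n := max (max n₀ n₂) (max m₀ m₁) with hn
    have he : e ∈ T n := hmono n₀ n ((le_max_left _ _).trans (le_max_left _ _)) he₀
    have ha₀' : a₀ ∈ T n := hmono m₀ n ((le_max_left _ _).trans (le_max_right _ _)) ha₀
    have ha₁' : a₁ ∈ T n := hmono m₁ n ((le_max_right _ _).trans (le_max_right _ _)) ha₁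
    have hBn : ∀ b ∈ B, ∃ b' ∈ B ∩ T n, b' ≤ b := by
      intro b hb
      obtain ⟨b', ⟨h1, h2⟩, h3⟩ := hB₂ b hb
      exact ⟨b', ⟨h1, hmono n₂ n ((le_max_right _ _).trans (le_max_left _ _)) h2⟩, h3⟩
    letI : SemilatticeSup ↥(T n) := subSemilatticeSup (T n) (hclosed n)
    set B' : Set ↥(T n) := {b : ↥(T n) | ↑b ∈ B} with hB'
    obtain ⟨a, haa₀, haa₁, hae⟩ := hURP n ⟨e, he⟩ ⟨a₀, ha₀'⟩ ⟨a₁, ha₁'⟩ B'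
      (hBdir n B hB hBn)
      (by
        rintro b hb
        obtain ⟨h1, h2⟩ := hab ↑b hb
        exact ⟨Subtype.coe_le_coe.mp h1, Subtype.coe_le_coe.mp h2⟩)
    refine ⟨↑a, Subtype.coe_le_coe.mpr haa₀, Subtype.coe_le_coe.mpr haa₁, ?_⟩
    intro b hb
    obtain ⟨b', ⟨hb'B, hb'T⟩, hb'le⟩ := hBn b hb
    have := hae ⟨b', hb'T⟩ hb'B
    have h2 : e ≤ (a : S) ⊔ b' := Subtype.coe_le_coe.mpr this
    exact h2.trans (sup_le_sup_left hb'le _)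
end

section
/- Every distributive (∨,0)-semilattice having no strictly decreasing ω₁-sequence of elements satisfies URP⁺_sr (hence also URP_sr). -/
/-!
Without strictly decreasing ω₁-sequences, every ℵ₀-downward directed set `B` has a least
element `b₀`: otherwise a transfinite recursion of length ω₁, each step picking an element of `B`
below the countably many earlier terms and below witnesses that they are not least, produces
a strictly decreasing ω₁-sequence. So the hypothesis of `URP⁺_sr(e)` reduces to
`e ≤ a₀ ⊔ b₀` and `e ≤ a₁ ⊔ b₀`, and two applications of distributivity refine `e` to
`e ≤ c ⊔ b₀` with `c ≤ a₀, a₁`. For `URP_sr(e)`, apply `URP⁺_sr(e)` to two distinct elements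
of the uncountable set `A`: the resulting `c` is a single-pair join, hence lies in `◇A`.
-/

/-- ω₁, realized as the set of ordinals below `(ℵ₁).ord`. -/
abbrev W : Type 1 := {o : Ordinal // o < (Cardinal.aleph 1).ord}

/-- There is no strictly decreasing ω₁-sequence in `S`. -/
def NoStrictDecOmega1 (S : Type*) [Preorder S] : Prop :=
  ¬ ∃ x : W → S, ∀ ξ η : W, ξ < η → x η < x ξ

theorem W.countable_Iio (ξ : W) : (Set.Iio ξ).Countable := by
  have : (Set.Iio ξ.val).Countable := by
    rw [← Cardinal.le_aleph0_iff_set_countable, Cardinal.mk_Iio_ordinal, Cardinal.lift_le_aleph0,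
      ← Cardinal.lt_aleph_one_iff]
    exact Cardinal.lt_ord.mp ξ.prop
  exact this.preimage Subtype.val_injective

namespace DownDirectedCtbl

variable {S : Type*} [Preorder S] {B : Set S}

theorem exists_le_forall (hB : DownDirectedCtbl B) {ι : Type*} [Countable ι] (g : ι → B) :
    ∃ b : B, ∀ i, b ≤ g i := by
  obtain ⟨b, hb, hle⟩ := hB (Set.range fun i => (g i : S))
    (Set.range_subset_iff.mpr fun i => (g i).prop) (Set.countable_range _)
  exact ⟨⟨b, hb⟩, fun i => hle _ ⟨i, rfl⟩⟩

theorem exists_seq_le_apply {α : Type*} [Preorder α] [WellFoundedLT α]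
    (hα : ∀ ξ : α, (Set.Iio ξ).Countable) (hB : DownDirectedCtbl B) (f : B → B) :
    ∃ x : α → B, ∀ ξ η, ξ < η → x η ≤ x ξ ∧ x η ≤ f (x ξ) := by
  have step (ξ : α) (prev : Set.Iio ξ → B) :
      ∃ b : B, ∀ i : Set.Iio ξ ⊕ Set.Iio ξ,
        b ≤ Sum.elim prev (f ∘ prev) i :=
    haveI := (hα ξ).to_subtype
    hB.exists_le_forall _
  let x : α → B := wellFounded_lt.fix fun ξ rec =>
    (step ξ fun η => rec η η.prop).choose
  refine ⟨x, fun ξ η hξη => ?_⟩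
  have hx : ∀ i : Set.Iio η ⊕ Set.Iio η,
      x η ≤ Sum.elim (fun ζ : Set.Iio η => x ζ) (f ∘ fun ζ : Set.Iio η => x ζ) i := by
    rw [show x η = _ from wellFounded_lt.fix_eq _ η]
    exact (step η _).choose_spec
  exact ⟨hx (.inl ⟨ξ, hξη⟩), hx (.inr ⟨ξ, hξη⟩)⟩

theorem exists_isLeast (hnd : NoStrictDecOmega1 S) (hB : DownDirectedCtbl B) :
    ∃ b, IsLeast B b := by
  by_contra! hleast
  have not_least (b : B) : ∃ c : B, ¬ b ≤ c := by
    by_contra! hb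
    exact hleast b ⟨b.prop, fun c hc => hb ⟨c, hc⟩⟩
  choose f hf using not_least
  obtain ⟨x, hx⟩ := hB.exists_seq_le_apply W.countable_Iio f
  refine hnd ⟨fun ξ => x ξ, fun ξ η hξη => lt_of_le_not_ge (hx ξ η hξη).1 fun hle => ?_⟩
  exact hf (x ξ) (hle.trans (hx ξ η hξη).2)

end DownDirectedCtbl

theorem DistribSemilatticeSup.exists_le_le_le_sup {S : Type*} [SemilatticeSup S]
    (hd : DistribSemilatticeSup S) {e a₀ a₁ b : S} (h₀ : e ≤ a₀ ⊔ b) (h₁ : e ≤ a₁ ⊔ b) :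
    ∃ c, c ≤ a₀ ∧ c ≤ a₁ ∧ e ≤ c ⊔ b := by
  obtain ⟨u, v₀, hu, hv₀, rfl⟩ := hd a₀ b e h₀
  obtain ⟨c, v₁, hc, hv₁, rfl⟩ := hd a₁ b u (le_sup_left.trans h₁)
  refine ⟨c, le_sup_left.trans hu, hc, ?_⟩
  calc c ⊔ v₁ ⊔ v₀ = c ⊔ (v₁ ⊔ v₀) := sup_assoc ..
    _ ≤ c ⊔ b := sup_le_sup_left (sup_le hv₁ hv₀) c

theorem urpsrPlus_of_distrib_of_noStrictDecOmega1 {S : Type*} [SemilatticeSup S]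
    (hd : DistribSemilatticeSup S) (hnd : NoStrictDecOmega1 S) (e : S) : URPsrPlus e := by
  intro a₀ a₁ B hB hyp
  obtain ⟨b₀, hb₀B, hb₀⟩ := hB.exists_isLeast hnd
  obtain ⟨c, hc₀, hc₁, hce⟩ := hd.exists_le_le_le_sup (hyp b₀ hb₀B).1 (hyp b₀ hb₀B).2
  exact ⟨c, hc₀, hc₁, fun b hb => hce.trans (sup_le_sup_left (hb₀ hb) c)⟩

theorem memDiat_of_le_of_le {S : Type*} [SemilatticeSup S] {A : Set S} {a₀ a₁ c : S}
    (ha₀ : a₀ ∈ A) (ha₁ : a₁ ∈ A) (hne : a₀ ≠ a₁) (hc₀ : c ≤ a₀) (hc₁ : c ≤ a₁) :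
    memDiat A c := by
  classical
  refine ⟨{a₀, a₁}, fun _ => c, ?_, ?_, ⟨s(a₀, a₁), ?_⟩, (Finset.sup'_const ..).symm⟩
  · simp [Set.insert_subset_iff, ha₀, ha₁]
  · simp only [Finset.mem_insert, Finset.mem_singleton]
    rintro a (rfl | rfl) <;> simp [hc₀, hc₁]
  · simp [hne]

theorem URPsrPlus.urpsr {S : Type*} [SemilatticeSup S] {e : S} (h : URPsrPlus e) :
    URPsr e := by
  intro A B hA hB hyp
  obtain ⟨a₀, ha₀, a₁, ha₁, hne⟩ : A.Nontrivial := by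
    by_contra htriv
    exact hA (Set.not_nontrivial_iff.mp htriv).countable
  obtain ⟨c, hc₀, hc₁, hce⟩ :=
    h a₀ a₁ B hB fun b hb => ⟨(hyp a₀ ha₀ b hb).2, (hyp a₁ ha₁ b hb).2⟩
  exact ⟨c, memDiat_of_le_of_le ha₀ ha₁ hne hc₀ hc₁, hce⟩

theorem stmt_15_general {S : Type*} [SemilatticeSup S]
    (hd : DistribSemilatticeSup S) (hnd : NoStrictDecOmega1 S) :
    (∀ e : S, URPsrPlus e) ∧ (∀ e : S, URPsr e) :=
  ⟨urpsrPlus_of_distrib_of_noStrictDecOmega1 hd hnd,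
    fun e => (urpsrPlus_of_distrib_of_noStrictDecOmega1 hd hnd e).urpsr⟩

/-- Proposition 7.5: every distributive `(∨,0)`-semilattice with no strictly decreasing
ω₁-sequence satisfies `URP⁺_sr` (hence also `URP_sr`). -/
theorem stmt_15 {S : Type*} [SemilatticeSup S] [OrderBot S]
    (hd : DistribSemilatticeSup S) (hnd : NoStrictDecOmega1 S) :
    (∀ e : S, URPsrPlus e) ∧ (∀ e : S, URPsr e) :=
  stmt_15_general hd hnd
end

section
/- There exists a (∨,0)-embedding of the semilattice S_{ω₁} into the reduced power (S_ω)^ω/fin of the countable semilattice S_ω modulo the Fréchet filter. -/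
set_option linter.unusedSectionVars false
set_option linter.unusedVariables false


theorem W_zero_lt : (0 : Ordinal) < (Cardinal.aleph 1).ord := by
  rw [← Cardinal.ord_zero]; exact Cardinal.ord_lt_ord.2 (Cardinal.aleph_pos 1)

instance : Nonempty W := ⟨⟨0, W_zero_lt⟩⟩

section Skappa

variable (α : Type*) [LinearOrder α]

/-- An interval `[a, b)` or a final interval `[a, κ)`. -/
def IsItv (s : Set α) : Prop := (∃ a b : α, s = Set.Ico a b) ∨ ∃ a : α, s = Set.Ici a

/-- The interval algebra: finite unions of intervals. -/
def BAlg : Set (Set α) :=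
  {x | ∃ F : Set (Set α), F.Finite ∧ (∀ s ∈ F, IsItv α s) ∧ x = ⋃₀ F}

/-- The bounded members of the interval algebra. -/
def ISet : Set (Set α) := {x | x ∈ BAlg α ∧ ∃ a : α, x ⊆ Set.Iio a}

/-- The members of the interval algebra containing a final segment. -/
def FSet : Set (Set α) := {x | x ∈ BAlg α ∧ ∃ a : α, Set.Ici a ⊆ x}

/-- The subsets that are finite or everything. -/
def DSet : Set (Set α) := {x | x.Finite ∨ x = Set.univ}

/-- The semilattice `S_κ`, as a set of pairs. -/
def SkSet : Set (Set α × Set α) :=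
  (({∅} : Set (Set α)) ×ˢ ISet α) ∪ ((DSet α \ {∅}) ×ˢ FSet α)

/-- The semilattice `S_κ` as a type. -/
abbrev Sk : Type _ := ↥(SkSet α)

variable {α}

theorem BAlg_union {x y : Set α} (hx : x ∈ BAlg α) (hy : y ∈ BAlg α) :
    x ∪ y ∈ BAlg α := by
  obtain ⟨F, hF, hFi, rfl⟩ := hx
  obtain ⟨G, hG, hGi, rfl⟩ := hy
  refine ⟨F ∪ G, hF.union hG, ?_, (Set.sUnion_union F G).symm⟩
  rintro s (h | h)
  exacts [hFi s h, hGi s h]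

theorem ISet_union {x y : Set α} (hx : x ∈ ISet α) (hy : y ∈ ISet α) :
    x ∪ y ∈ ISet α := by
  obtain ⟨hxB, a, ha⟩ := hx
  obtain ⟨hyB, b, hb⟩ := hy
  exact ⟨BAlg_union hxB hyB, max a b,
    Set.union_subset (ha.trans (Set.Iio_subset_Iio (le_max_left _ _)))
      (hb.trans (Set.Iio_subset_Iio (le_max_right _ _)))⟩

theorem FSet_union_left {x y : Set α} (hx : x ∈ BAlg α) (hy : y ∈ FSet α) :
    x ∪ y ∈ FSet α := by
  obtain ⟨hyB, a, ha⟩ := hy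
  exact ⟨BAlg_union hx hyB, a, ha.trans Set.subset_union_right⟩

theorem DSet_union {x y : Set α} (hx : x ∈ DSet α) (hy : y ∈ DSet α) :
    x ∪ y ∈ DSet α := by
  rcases hx with hx | hx
  · rcases hy with hy | hy
    · exact Or.inl (hx.union hy)
    · exact Or.inr (by rw [hy, Set.union_univ])
  · exact Or.inr (by rw [hx, Set.univ_union])

theorem SkSet_sup_mem ⦃p q : Set α × Set α⦄ (hp : p ∈ SkSet α) (hq : q ∈ SkSet α) :
    p ⊔ q ∈ SkSet α := by
  have hPQ : p ⊔ q = (p.1 ∪ q.1, p.2 ∪ q.2) := rfl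
  rw [hPQ]
  rcases hp with ⟨hp1, hp2⟩ | ⟨hp1, hp2⟩
  · have hp2' : p.2 ∈ BAlg α ∧ ∃ a : α, p.2 ⊆ Set.Iio a := hp2
    rcases hq with ⟨hq1, hq2⟩ | ⟨hq1, hq2⟩
    · refine Or.inl ⟨?_, ISet_union hp2 hq2⟩
      have e1 : p.1 = ∅ := hp1
      have e2 : q.1 = ∅ := hq1
      show p.1 ∪ q.1 ∈ ({∅} : Set (Set α))
      simp [e1, e2]
    · refine Or.inr ⟨?_, FSet_union_left hp2'.1 hq2⟩
      have e1 : p.1 = ∅ := hp1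
      simpa [e1] using hq1
  · have hp2' : p.2 ∈ BAlg α ∧ ∃ a : α, Set.Ici a ⊆ p.2 := hp2
    rcases hq with ⟨hq1, hq2⟩ | ⟨hq1, hq2⟩
    · have hq2' : q.2 ∈ BAlg α ∧ ∃ a : α, q.2 ⊆ Set.Iio a := hq2
      refine Or.inr ⟨?_, ?_⟩
      · have e2 : q.1 = ∅ := hq1
        simpa [e2] using hp1
      · have h := FSet_union_left hq2'.1 hp2
        rwa [Set.union_comm] at h
    · refine Or.inr ⟨⟨DSet_union hp1.1 hq1.1, fun h => ?_⟩, FSet_union_left hp2'.1 hq2⟩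
      have h' : p.1 ∪ q.1 = ∅ := h
      exact hp1.2 (show p.1 ∈ ({∅} : Set (Set α)) from Set.union_empty_iff.1 h' |>.1)

noncomputable instance Sk.instSemilatticeSup : SemilatticeSup (Sk α) :=
  Subtype.semilatticeSup fun _ _ hx hy => SkSet_sup_mem hx hy

theorem empty_mem_BAlg : (∅ : Set α) ∈ BAlg α :=
  ⟨∅, Set.finite_empty, by simp, by simp⟩

noncomputable instance Sk.instOrderBot [Nonempty α] : OrderBot (Sk α) where
  bot := ⟨(∅, ∅), Or.inl ⟨rfl, empty_mem_BAlg, Classical.arbitrary α, Set.empty_subset _⟩⟩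
  bot_le p := ⟨Set.empty_subset _, Set.empty_subset _⟩

end Skappa

theorem univ_mem_FSet_W : (Set.univ : Set W) ∈ FSet W := by
  have hIci : Set.Ici (⟨0, W_zero_lt⟩ : W) = Set.univ :=
    Set.eq_univ_of_forall fun o => zero_le (a := o.1)
  refine ⟨⟨{Set.Ici (⟨0, W_zero_lt⟩ : W)}, Set.finite_singleton _, ?_, ?_⟩,
    ⟨0, W_zero_lt⟩, Set.subset_univ _⟩
  · rintro s hs
    rw [Set.mem_singleton_iff] at hs
    exact Or.inr ⟨_, hs⟩
  · rw [Set.sUnion_singleton, hIci]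

theorem top_mem_SkSet : ((Set.univ : Set W), (Set.univ : Set W)) ∈ SkSet W :=
  Or.inr ⟨⟨Or.inr rfl, by simp [Set.univ_eq_empty_iff]⟩, univ_mem_FSet_W⟩

/-!
Since every countable ordinal has countably many predecessors, the recursion
`f a n = 1 + max {f b n | b among the first n + 1 predecessors of a}` yields maps `g n : ω₁ → ℕ`
with `g n a < g n b` for all large `n` whenever `a < b`; so every finite subset of `ω₁` is
eventually mapped order-preservingly into `ω`. An element `(d, b)` of `S_{ω₁}` is pushed along
`g n` componentwise: `d` by direct image (with `ω₁ ↦ ω`), and `b`, a union of cells of a finite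
mesh `E`, by sending the cell `[e, e⁺)` of `E` to `[g e, g e⁺)`. Once `g n` is order-preserving on
the meshes involved, this push does not depend on the mesh, preserves joins and zero, and keeps a
witness of `x ≰ y`; hence the germs of the pushed sequences form a `(∨,0)`-embedding.
-/

open Filter Set

def EventuallyStrictMono {α : Type*} [Preorder α] (g : ℕ → α → ℕ) : Prop :=
  ∀ ⦃a b : α⦄, a < b → ∀ᶠ n in cofinite, g n a < g n b

section Dominating

variable {α : Type*} [Preorder α] [WellFoundedLT α]

/-- `e a` enumerates the predecessors of `a`, padded with `none` so that `Iio a` may be empty. -/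
noncomputable def dominatingSeq (e : ∀ a : α, ℕ → Option (Iio a)) : α → ℕ → ℕ :=
  WellFoundedLT.fix fun a IH n =>
    (Finset.range (n + 1)).sup (fun k => (e a k).elim 0 fun b => IH b b.2 n) + 1

theorem dominatingSeq_lt (e : ∀ a : α, ℕ → Option (Iio a)) {a b : α}
    (he : Function.Surjective (e a)) (hb : b < a) :
    ∀ᶠ n in cofinite, dominatingSeq e b n < dominatingSeq e a n := by
  obtain ⟨k, hk⟩ := he (some ⟨b, hb⟩)
  rw [Nat.cofinite_eq_atTop, eventually_atTop]
  refine ⟨k, fun n hn => ?_⟩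
  rw [dominatingSeq, WellFoundedLT.fix_eq _ a, ← dominatingSeq, Nat.lt_succ_iff]
  have h := Finset.le_sup (f := fun k => (e a k).elim 0 fun c => dominatingSeq e c.1 n)
    (Finset.mem_range_succ_iff.2 hn)
  rwa [hk] at h

theorem exists_eventuallyStrictMono (hα : ∀ a : α, (Iio a).Countable) :
    ∃ g : ℕ → α → ℕ, EventuallyStrictMono g := by
  have : ∀ a : α, ∃ e : ℕ → Option (Iio a), Function.Surjective e := fun a =>
    have := (hα a).to_subtype
    exists_surjective_nat _
  choose e he using this
  exact ⟨fun n a => dominatingSeq e a n, fun a b hab => dominatingSeq_lt e (he b) hab⟩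

end Dominating

theorem countable_Iio_W (a : W) : (Iio a).Countable := by
  have h : (Iio a.1).Countable := by
    rw [← Cardinal.le_aleph0_iff_set_countable, Cardinal.mk_Iio_ordinal,
      ← Cardinal.lift_aleph0.{1, 0}, Cardinal.lift_le, ← Cardinal.lt_aleph_one_iff]
    exact Cardinal.lt_ord.1 a.2
  exact h.preimage Subtype.val_injective

section Mesh

variable {α β : Type*} [LinearOrder α] [LinearOrder β]

/-- For `b` a union of cells of the mesh `E`, this sends the cell `[e, e⁺)` to `[g e, g e⁺)`. -/
def meshImage (g : α → β) (E : Finset α) (b : Set α) : Set β :=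
  {m | ∃ e ∈ b, IsGreatest {x ∈ (E : Set α) | g x ≤ m} e}

/-- `b` is a union of cells `[e, e⁺)` of `E` (where `e⁺` is the next point of `E`, or `⊤`). -/
def IsMesh (E : Finset α) (b : Set α) : Prop :=
  meshImage id E b = b

variable {g : α → β} {E E' : Finset α} {b b' : Set α}

theorem meshImage_union : meshImage g E (b ∪ b') = meshImage g E b ∪ meshImage g E b' := by
  ext m
  simp only [meshImage, mem_union, mem_ofPred_eq, or_and_right, exists_or]

theorem meshImage_mono (h : b ⊆ b') : meshImage g E b ⊆ meshImage g E b' :=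
  fun _ ⟨e, he, hg⟩ => ⟨e, h he, hg⟩

@[simp]
theorem meshImage_empty_right : meshImage g E ∅ = ∅ := by
  simp [meshImage]

@[simp]
theorem meshImage_empty_left : meshImage g ∅ b = ∅ := by
  simp [meshImage, IsGreatest]

theorem exists_isGreatest {m : β} (h : ∃ e ∈ E, g e ≤ m) :
    ∃ e, IsGreatest {x ∈ (E : Set α) | g x ≤ m} e := by
  classical
  obtain ⟨e, he, hem⟩ := h
  have hne : (E.filter (g · ≤ m)).Nonempty := ⟨e, Finset.mem_filter.2 ⟨he, hem⟩⟩
  exact ⟨_, by simpa using Finset.isGreatest_max' _ hne⟩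

theorem isGreatest_max' (hE : E.Nonempty) {m : β} (hm : g (E.max' hE) ≤ m) :
    IsGreatest {x ∈ (E : Set α) | g x ≤ m} (E.max' hE) :=
  ⟨⟨E.max'_mem hE, hm⟩, fun x hx => E.le_max' x hx.1⟩

theorem isGreatest_apply (hg : StrictMonoOn g E) {c : α} (hc : c ∈ E) :
    IsGreatest {x ∈ (E : Set α) | g x ≤ g c} c :=
  ⟨⟨hc, le_rfl⟩, fun _ hx => not_lt.1 fun hcx => (hg hc hx.1 hcx).not_ge hx.2⟩

theorem mem_meshImage_apply (hg : StrictMonoOn g E) {c : α} (hc : c ∈ E) :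
    g c ∈ meshImage g E b ↔ c ∈ b :=
  ⟨fun ⟨_, he, hgr⟩ => hgr.unique (isGreatest_apply hg hc) ▸ he,
    fun h => ⟨c, h, isGreatest_apply hg hc⟩⟩

theorem isItv_setOf_isGreatest {e : α} (he : e ∈ E) :
    IsItv β {m | IsGreatest {x ∈ (E : Set α) | g x ≤ m} e} := by
  classical
  have key : ∀ m, IsGreatest {x ∈ (E : Set α) | g x ≤ m} e ↔
      g e ≤ m ∧ ∀ x ∈ E.filter (e < ·), m < g x := by
    intro m
    simp only [IsGreatest, upperBounds, Finset.mem_filter, mem_ofPred_eq, Finset.mem_coe]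
    refine ⟨fun h => ⟨h.1.2, fun x hx => not_le.1 fun hxm => (h.2 ⟨hx.1, hxm⟩).not_gt hx.2⟩,
      fun h => ⟨⟨he, h.1⟩, fun x hx => not_lt.1 fun hex => (h.2 x ⟨hx.1, hex⟩).not_ge hx.2⟩⟩
  rcases (E.filter (e < ·)).eq_empty_or_nonempty with hT | hT
  · refine Or.inr ⟨g e, ?_⟩
    ext m
    simp only [mem_ofPred_eq, key, hT]
    simp
  · refine Or.inl ⟨g e, (E.filter (e < ·)).inf' hT g, ?_⟩
    ext m
    simp only [mem_ofPred_eq, key, mem_Ico, Finset.lt_inf'_iff]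

theorem meshImage_mem_BAlg : meshImage g E b ∈ BAlg β := by
  refine ⟨(fun e => {m | IsGreatest {x ∈ (E : Set α) | g x ≤ m} e}) '' {e | e ∈ E ∧ e ∈ b},
    (E.finite_toSet.subset fun _ h => h.1).image _, ?_, ?_⟩
  · rintro _ ⟨e, he, rfl⟩
    exact isItv_setOf_isGreatest he.1
  · ext m
    simp only [meshImage, mem_ofPred_eq, sUnion_image, mem_iUnion, exists_prop]
    exact ⟨fun ⟨e, hb, hg⟩ => ⟨e, ⟨hg.1.1, hb⟩, hg⟩, fun ⟨e, ⟨_, hb⟩, hg⟩ => ⟨e, hb, hg⟩⟩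

theorem setOf_le_eq_of_isGreatest (hg : StrictMonoOn g E') (hE : E ⊆ E') {m : β} {e' : α}
    (he' : IsGreatest {x ∈ (E' : Set α) | g x ≤ m} e') :
    {x ∈ (E : Set α) | g x ≤ m} = {x ∈ (E : Set α) | id x ≤ e'} := by
  ext x
  refine and_congr_right fun hx => ⟨fun hxm => he'.2 ⟨hE hx, hxm⟩, fun hxe => ?_⟩
  exact (hg.monotoneOn (hE hx) he'.1.1 hxe).trans he'.1.2

theorem meshImage_meshImage (hg : StrictMonoOn g E') (hE : E ⊆ E') :
    meshImage g E' (meshImage id E b) = meshImage g E b := by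
  ext m
  constructor
  · rintro ⟨e', ⟨e, heb, he⟩, he'⟩
    exact ⟨e, heb, setOf_le_eq_of_isGreatest hg hE he' ▸ he⟩
  · rintro ⟨e, heb, he⟩
    obtain ⟨e', he'⟩ := exists_isGreatest (E := E') ⟨e, hE he.1.1, he.1.2⟩
    exact ⟨e', ⟨e, heb, setOf_le_eq_of_isGreatest hg hE he' ▸ he⟩, he'⟩

theorem IsMesh.meshImage_eq (h : IsMesh E b) (hE : E ⊆ E') (hg : StrictMonoOn g E') :
    meshImage g E b = meshImage g E' b := by
  rw [← meshImage_meshImage hg hE, h]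

theorem IsMesh.mono (h : IsMesh E b) (hE : E ⊆ E') : IsMesh E' b :=
  (h.meshImage_eq hE strictMonoOn_id).symm.trans h

theorem IsMesh.union [DecidableEq α] (h : IsMesh E b) (h' : IsMesh E' b') :
    IsMesh (E ∪ E') (b ∪ b') := by
  rw [IsMesh, meshImage_union, h.mono Finset.subset_union_left, h'.mono Finset.subset_union_right]

theorem isMesh_Ico [DecidableEq α] (a c : α) : IsMesh {a, c} (Ico a c) := by
  ext m
  simp only [meshImage, IsGreatest, upperBounds, Finset.coe_insert, Finset.coe_singleton,
    mem_insert_iff, mem_singleton_iff, id, mem_ofPred_eq, mem_Ico]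
  constructor
  · rintro ⟨e, ⟨hae, hec⟩, ⟨he | rfl, hem⟩, hmax⟩
    · subst he
      exact ⟨hem, lt_of_not_ge fun hcm => (hmax ⟨Or.inr rfl, hcm⟩).not_gt hec⟩
    · exact absurd hec (lt_irrefl _)
  · rintro ⟨ham, hmc⟩
    refine ⟨a, ⟨le_rfl, ham.trans_lt hmc⟩, ⟨Or.inl rfl, ham⟩, fun x ⟨hx, hxm⟩ => ?_⟩
    rcases hx with rfl | rfl
    exacts [le_rfl, absurd hxm hmc.not_ge]

theorem isMesh_Ici (a : α) : IsMesh {a} (Ici a) := by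
  ext m
  simp only [meshImage, IsGreatest, upperBounds, Finset.coe_singleton, mem_singleton_iff, id,
    mem_ofPred_eq, mem_Ici]
  grind

theorem exists_isMesh (hb : b ∈ BAlg α) : ∃ E : Finset α, IsMesh E b := by
  classical
  obtain ⟨F, hF, hFi, rfl⟩ := hb
  induction F, hF using Set.Finite.induction_on with
  | empty => exact ⟨∅, by simp [IsMesh]⟩
  | @insert s F _ _ ih =>
    obtain ⟨E, hE⟩ := ih fun t ht => hFi t (mem_insert_of_mem s ht)
    rw [sUnion_insert]
    rcases hFi s (mem_insert s F) with ⟨a, c, rfl⟩ | ⟨a, rfl⟩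
    exacts [⟨_, (isMesh_Ico a c).union hE⟩, ⟨_, (isMesh_Ici a).union hE⟩]

theorem IsMesh.nonempty (h : IsMesh E b) (hb : b.Nonempty) : E.Nonempty := by
  obtain ⟨c, hc⟩ := hb
  rw [← h] at hc
  obtain ⟨e, -, he⟩ := hc
  exact ⟨e, he.1.1⟩

theorem Ici_subset_meshImage (hE : E.Nonempty) (hb : E.max' hE ∈ b) :
    Ici (g (E.max' hE)) ⊆ meshImage g E b :=
  fun _ hm => ⟨_, hb, isGreatest_max' hE hm⟩

theorem meshImage_subset_Iio (hE : E.Nonempty) (hb : E.max' hE ∉ b) :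
    meshImage g E b ⊆ Iio (g (E.max' hE)) := by
  rintro m ⟨e, heb, he⟩
  by_contra hm
  exact hb (he.unique (isGreatest_max' hE (not_lt.1 hm)) ▸ heb)

theorem IsMesh.max'_mem_iff (h : IsMesh E b) (hE : E.Nonempty) :
    E.max' hE ∈ b ↔ ∃ a, Ici a ⊆ b := by
  refine ⟨fun hb => ⟨_, h ▸ Ici_subset_meshImage (g := id) hE hb⟩, fun ⟨a, ha⟩ => ?_⟩
  have hc : max a (E.max' hE) ∈ meshImage id E b := h.symm ▸ ha (le_max_left _ _)
  obtain ⟨e, heb, he⟩ := hc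
  exact he.unique (isGreatest_max' hE (le_max_right _ _)) ▸ heb

theorem IsMesh.meshImage_mem_FSet (h : IsMesh E b) (hb : b ∈ FSet α) :
    meshImage g E b ∈ FSet β := by
  obtain ⟨-, a, ha⟩ := hb
  have hE := h.nonempty ⟨a, ha self_mem_Ici⟩
  exact ⟨meshImage_mem_BAlg, _, Ici_subset_meshImage hE ((h.max'_mem_iff hE).2 ⟨a, ha⟩)⟩

theorem IsMesh.meshImage_mem_ISet [Nonempty β] (h : IsMesh E b) (hb : b ∈ ISet α) :
    meshImage g E b ∈ ISet β := by
  obtain ⟨-, a, ha⟩ := hb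
  refine ⟨meshImage_mem_BAlg, ?_⟩
  rcases E.eq_empty_or_nonempty with rfl | hE
  · exact ⟨Classical.arbitrary β, by rw [meshImage_empty_left]; exact empty_subset _⟩
  · refine ⟨_, meshImage_subset_Iio hE fun hmax => ?_⟩
    obtain ⟨c, hc⟩ := (h.max'_mem_iff hE).1 hmax
    exact (ha (hc (le_max_left c a))).not_ge (le_max_right c a)

end Mesh

section Push

variable {α β : Type*} [LinearOrder α] [LinearOrder β]

open Classical in
/-- On `D_κ` the only infinite member is `κ` itself, which is sent to `univ`. -/
noncomputable def imageOrUniv (g : α → β) (d : Set α) : Set β :=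
  if d.Finite then g '' d else univ

variable {g : α → β} {d d' : Set α}

theorem imageOrUniv_of_finite (hd : d.Finite) : imageOrUniv g d = g '' d := by
  simp [imageOrUniv, hd]

theorem imageOrUniv_of_infinite (hd : d.Infinite) : imageOrUniv g d = univ := by
  simp [imageOrUniv, hd]

theorem imageOrUniv_union : imageOrUniv g (d ∪ d') = imageOrUniv g d ∪ imageOrUniv g d' := by
  by_cases h : (d ∪ d').Finite
  · rw [imageOrUniv_of_finite h, imageOrUniv_of_finite (h.subset subset_union_left),
      imageOrUniv_of_finite (h.subset subset_union_right), image_union]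
  · rw [imageOrUniv_of_infinite h]
    rcases not_and_or.1 (finite_union.not.1 h) with hd | hd
    · rw [imageOrUniv_of_infinite hd, univ_union]
    · rw [imageOrUniv_of_infinite hd, union_univ]

theorem imageOrUniv_mono (h : d ⊆ d') : imageOrUniv g d ⊆ imageOrUniv g d' := by
  by_cases hd' : d'.Finite
  · rw [imageOrUniv_of_finite hd', imageOrUniv_of_finite (hd'.subset h)]
    exact image_mono h
  · rw [imageOrUniv_of_infinite hd']
    exact subset_univ _

@[simp]
theorem imageOrUniv_empty : imageOrUniv g ∅ = ∅ := by
  simp [imageOrUniv_of_finite finite_empty]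

theorem imageOrUniv_mem_DSet : imageOrUniv g d ∈ DSet β := by
  by_cases hd : d.Finite
  · rw [imageOrUniv_of_finite hd]
    exact Or.inl (hd.image g)
  · exact Or.inr (imageOrUniv_of_infinite hd)

theorem imageOrUniv_nonempty (hd : d.Nonempty) : (imageOrUniv g d).Nonempty := by
  by_cases hfin : d.Finite
  · rw [imageOrUniv_of_finite hfin]
    exact hd.image g
  · rw [imageOrUniv_of_infinite hfin]
    exact (hd.image g).mono (subset_univ _)

theorem not_imageOrUniv_subset [Infinite β] {c : α} (hd' : d' ∈ DSet α) (hc : c ∈ d)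
    (hc' : c ∉ d') (hg : InjOn g (insert c d')) : ¬ imageOrUniv g d ⊆ imageOrUniv g d' := by
  have hfin : d'.Finite := hd'.resolve_right fun h => hc' (h ▸ mem_univ c)
  rw [imageOrUniv_of_finite hfin]
  intro hsub
  by_cases hd : d.Finite
  · rw [imageOrUniv_of_finite hd] at hsub
    obtain ⟨e, he, hge⟩ := hsub (mem_image_of_mem g hc)
    exact hc' (hg (mem_insert_of_mem c he) (mem_insert c d') hge ▸ he)
  · rw [imageOrUniv_of_infinite hd] at hsub
    exact infinite_univ ((hfin.image g).subset hsub)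

def pushSk (g : α → β) (E : Finset α) (p : Set α × Set α) : Set β × Set β :=
  (imageOrUniv g p.1, meshImage g E p.2)

theorem pushSk_sup (g : α → β) (E : Finset α) (p q : Set α × Set α) :
    pushSk g E (p ⊔ q) = pushSk g E p ⊔ pushSk g E q :=
  Prod.ext imageOrUniv_union meshImage_union

theorem pushSk_mono (g : α → β) (E : Finset α) {p q : Set α × Set α} (h : p ≤ q) :
    pushSk g E p ≤ pushSk g E q :=
  ⟨imageOrUniv_mono h.1, meshImage_mono h.2⟩

theorem pushSk_mem_SkSet [Nonempty β] {E : Finset α} {p : Set α × Set α} (hp : p ∈ SkSet α)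
    (hE : IsMesh E p.2) : pushSk g E p ∈ SkSet β := by
  rcases hp with ⟨h1, h2⟩ | ⟨⟨h1, h1'⟩, h2⟩
  · refine Or.inl ⟨?_, hE.meshImage_mem_ISet h2⟩
    simp [pushSk, mem_singleton_iff.1 h1]
  · exact Or.inr ⟨⟨imageOrUniv_mem_DSet, (imageOrUniv_nonempty
      (nonempty_iff_ne_empty.2 h1')).ne_empty⟩, hE.meshImage_mem_FSet h2⟩

end Push

section Embedding

variable {α : Type*} [LinearOrder α]

theorem Sk.fst_mem_DSet (x : Sk α) : x.1.1 ∈ DSet α := by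
  rcases x.2 with h | h
  · exact Or.inl (mem_singleton_iff.1 h.1 ▸ finite_empty)
  · exact h.1.1

theorem Sk.snd_mem_BAlg (x : Sk α) : x.1.2 ∈ BAlg α := by
  rcases x.2 with h | h
  exacts [h.2.1, h.2.1]

noncomputable def Sk.mesh (x : Sk α) : Finset α :=
  (exists_isMesh x.snd_mem_BAlg).choose

theorem Sk.isMesh_mesh (x : Sk α) : IsMesh x.mesh x.1.2 :=
  (exists_isMesh x.snd_mem_BAlg).choose_spec

noncomputable def skSeq (g : ℕ → α → ℕ) (x : Sk α) (n : ℕ) : Sk ℕ :=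
  ⟨pushSk (g n) x.mesh x.1, pushSk_mem_SkSet x.2 x.isMesh_mesh⟩

noncomputable def skGerm (g : ℕ → α → ℕ) (x : Sk α) : Germ (cofinite : Filter ℕ) (Sk ℕ) :=
  skSeq g x

variable {g : ℕ → α → ℕ} {x y : Sk α} {U : Finset α} {n : ℕ}

theorem skSeq_val_eq (hx : x.mesh ⊆ U) (hn : StrictMonoOn (g n) U) :
    (skSeq g x n).1 = pushSk (g n) U x.1 :=
  Prod.ext rfl (x.isMesh_mesh.meshImage_eq hx hn)

theorem skSeq_le_skSeq_iff (hx : x.mesh ⊆ U) (hy : y.mesh ⊆ U) (hn : StrictMonoOn (g n) U) :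
    skSeq g x n ≤ skSeq g y n ↔ pushSk (g n) U x.1 ≤ pushSk (g n) U y.1 := by
  rw [← Subtype.coe_le_coe, skSeq_val_eq hx hn, skSeq_val_eq hy hn]

theorem eventually_strictMonoOn (hg : EventuallyStrictMono g) (E : Finset α) :
    ∀ᶠ n in cofinite, StrictMonoOn (g n) E := by
  have h : ∀ p ∈ E ×ˢ E, ∀ᶠ n in cofinite, p.1 < p.2 → g n p.1 < g n p.2 := fun p _ => by
    by_cases hp : p.1 < p.2
    · exact (hg hp).mono fun _ hn _ => hn
    · exact .of_forall fun _ h => absurd h hp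
  filter_upwards [(eventually_all_finset _).2 h] with n hn a ha b hb hab
  exact hn (a, b) (Finset.mem_product.2 ⟨ha, hb⟩) hab

theorem eventually_skSeq_sup (hg : EventuallyStrictMono g) (x y : Sk α) :
    ∀ᶠ n in cofinite, skSeq g (x ⊔ y) n = skSeq g x n ⊔ skSeq g y n := by
  classical
  filter_upwards [eventually_strictMonoOn hg (x.mesh ∪ y.mesh ∪ (x ⊔ y).mesh)] with n hn
  apply Subtype.ext
  rw [Subtype.coe_sup SkSet_sup_mem, skSeq_val_eq (by grind) hn, skSeq_val_eq (by grind) hn,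
    skSeq_val_eq (by grind) hn]
  exact pushSk_sup _ _ _ _

theorem eventually_skSeq_le (hg : EventuallyStrictMono g) (h : x ≤ y) :
    ∀ᶠ n in cofinite, skSeq g x n ≤ skSeq g y n := by
  classical
  filter_upwards [eventually_strictMonoOn hg (x.mesh ∪ y.mesh)] with n hn
  exact (skSeq_le_skSeq_iff Finset.subset_union_left Finset.subset_union_right hn).2
    (pushSk_mono _ _ h)

theorem eventually_not_skSeq_le (hg : EventuallyStrictMono g) (h : ¬ x ≤ y) :
    ∀ᶠ n in cofinite, ¬ skSeq g x n ≤ skSeq g y n := by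
  classical
  obtain ⟨c, hcx, hcy⟩ | ⟨c, hcx, hcy⟩ : (∃ c ∈ x.1.1, c ∉ y.1.1) ∨ ∃ c ∈ x.1.2, c ∉ y.1.2 := by
    have h' : ¬ (x.1.1 ⊆ y.1.1 ∧ x.1.2 ⊆ y.1.2) := h
    simpa only [← not_subset, ← not_and_or] using h'
  · have hfin : y.1.1.Finite := y.fst_mem_DSet.resolve_right fun hu => hcy (hu ▸ mem_univ c)
    filter_upwards [eventually_strictMonoOn hg (insert c hfin.toFinset)] with n hn hle
    exact not_imageOrUniv_subset y.fst_mem_DSet hcx hcy (by simpa using hn.injOn) hle.1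
  · filter_upwards [eventually_strictMonoOn hg (x.mesh ∪ y.mesh ∪ {c})] with n hn hle
    rw [skSeq_le_skSeq_iff (by grind) (by grind) hn] at hle
    have hc : c ∈ x.mesh ∪ y.mesh ∪ {c} := by simp
    exact hcy ((mem_meshImage_apply hn hc).1 (hle.2 ((mem_meshImage_apply hn hc).2 hcx)))

theorem skGerm_le_skGerm_iff (hg : EventuallyStrictMono g) : skGerm g x ≤ skGerm g y ↔ x ≤ y := by
  refine ⟨fun hle => ?_, fun h => Germ.coe_le.2 (eventually_skSeq_le hg h)⟩
  by_contra h
  obtain ⟨n, hle, hnle⟩ := ((Germ.coe_le.1 hle).and (eventually_not_skSeq_le hg h)).exists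
  exact hnle hle

theorem skGerm_sup (hg : EventuallyStrictMono g) (x y : Sk α) :
    skGerm g (x ⊔ y) = skGerm g x ⊔ skGerm g y :=
  Germ.coe_eq.2 (eventually_skSeq_sup hg x y)

theorem skGerm_bot [Nonempty α] (g : ℕ → α → ℕ) : skGerm g ⊥ = ⊥ :=
  congrArg _ (funext fun _ => Subtype.ext (Prod.ext imageOrUniv_empty meshImage_empty_right))

end Embedding

/-- Lemma 7.8: there is a `(∨,0)`-embedding of `S_{ω₁}` into the reduced power
`(S_ω)^ω/fin`, i.e. the germs of sequences in `S_ω` modulo the Fréchet (cofinite)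
filter on ω. Here `S_ω = Sk ℕ` and `S_{ω₁} = Sk W`. -/
theorem stmt_17 :
    ∃ h : Sk W → Filter.Germ (Filter.cofinite : Filter ℕ) (Sk ℕ),
      Function.Injective h ∧
      (∀ x y : Sk W, h (x ⊔ y) = h x ⊔ h y) ∧
      h ⊥ = ⊥ ∧
      (∀ x y : Sk W, h x ≤ h y ↔ x ≤ y) := by
  obtain ⟨g, hg⟩ := exists_eventuallyStrictMono countable_Iio_W
  refine ⟨skGerm g, fun x y hxy => ?_, skGerm_sup hg, skGerm_bot g,
    fun x y => skGerm_le_skGerm_iff hg⟩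
  exact le_antisymm ((skGerm_le_skGerm_iff hg).1 hxy.le) ((skGerm_le_skGerm_iff hg).1 hxy.ge)
end
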